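/- arXiv:0904.3086 — 2 statements merged into one kernel-verified Lean document; each statement's English description precedes it below -/
import Mathlib

section
/- Let n ≥ 2 and 1 ≤ m ≤ n/2. For l = 1,...,m let W_l denote the subspace of L(V^{(n-m,m)}) (complex functions on m-subsets of {1,...,n}) consisting of all f of the form f(k) = ∑_{i ⊆ k, |i| = l} φ(i) with φ a completely degenerate kernel of order l, and let W_0 be the constants. Then L(V^{(n-m,m)}) = W_0 ⊕ W_1 ⊕ ... ⊕ W_m as an orthogonal direct sum with respect to the inner product ⟨f,h⟩ = C(n,m)^{-1} ∑_k f(k) conj(h(k)), and each W_l is invariant under the S_n-action (x·f)(k) = f(x⁻¹·k). -/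
open Finset

/-- `V^{(n-m,m)}`: the `m`-element subsets of `{1,...,n}`. -/
abbrev VSet (n m : ℕ) : Type := {s : Finset (Fin n) // s.card = m}

/-- Pointwise action of a permutation on an `m`-subset. -/
def permSub {n m : ℕ} (x : Equiv.Perm (Fin n)) (k : VSet n m) : VSet n m :=
  ⟨k.1.image x, by rw [Finset.card_image_of_injective _ x.injective]; exact k.2⟩

/-- Action of `S_n` on functions on `m`-subsets: `(x·f)(k) = f(x⁻¹·k)`. -/
def permAct {n m : ℕ} (x : Equiv.Perm (Fin n)) (f : VSet n m → ℂ) : VSet n m → ℂ :=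
  fun k => f (permSub x⁻¹ k)

/-- Indicator function `𝟙_j` of an `m`-subset `j`. -/
def indic {n m : ℕ} (j : VSet n m) : VSet n m → ℂ := fun k => if k = j then 1 else 0

/-- The subset `{1,...,m}` of `{1,...,n}` (as the first `m` elements of `Fin n`). -/
def firstSet (n m : ℕ) (h : m ≤ n) : VSet n m :=
  ⟨(Finset.range m).attachFin (fun a ha => lt_of_lt_of_le (Finset.mem_range.mp ha) h),
   by rw [Finset.card_attachFin, Finset.card_range]⟩

/-- Expectation of `g(X)` for a uniformly random permutation `X` of `{1,...,n}`. -/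
noncomputable def Eperm (n : ℕ) (g : Equiv.Perm (Fin n) → ℂ) : ℂ :=
  (∑ x : Equiv.Perm (Fin n), g x) / (Nat.factorial n : ℂ)

/-- Complete degeneracy of a symmetric kernel `φ` of order `l`. -/
def degenKer (n l : ℕ) (φ : Finset (Fin n) → ℂ) : Prop :=
  ∀ j : Finset (Fin n), j.card = l - 1 → ∑ a ∈ jᶜ, φ (insert a j) = 0

/-- The `l`-th symmetric Hoeffding space `W_l` inside `L(V^{(n-m,m)})`: for `l = 0`
the constants, and for `l ≥ 1` the functions `f(k) = ∑_{i ⊆ k, |i| = l} φ(i)` with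
`φ` a completely degenerate kernel of order `l`. -/
noncomputable def HoeffSpace (n m l : ℕ) : Submodule ℂ (VSet n m → ℂ) :=
  if l = 0 then Submodule.span ℂ {(fun _ => (1 : ℂ) : VSet n m → ℂ)}
  else Submodule.span ℂ
    {f : VSet n m → ℂ | ∃ φ : Finset (Fin n) → ℂ, degenKer n l φ ∧
      ∀ k : VSet n m, f k = ∑ i ∈ k.1.powersetCard l, φ i}

/-! Kernel sums of a completely degenerate kernel `ψ` of order `b` are orthogonal to all kernel
sums of lower order `a`: the pairing is `∑_{|i| = a} φ(i) ∑_{|j| = b} N(i, j) ψ(j)`, where the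
number `N(i, j)` of `m`-sets containing `i ∪ j` depends only on `i ∩ j`, and `ψ` sums to zero over
each family `{j : j ∩ i = s}` when `|i| < b`, by downward induction on `s` starting from
degeneracy. Orthogonality gives independence. For spanning, the operator
`up χ (i) = ∑_{a ∈ i} χ(i \ {a})` on kernels has adjoint `down φ (s) = ∑_{a ∉ s} φ(s ∪ {a})`,
so every kernel is `up χ + z` with `down z = 0`, i.e. `z` completely degenerate; as the kernel
sum of order `l + 1` of `up χ` is `(m - l)` times that of `χ` of order `l`, induction puts every
kernel sum of order `≤ m` into `W₀ + ⋯ + W_m`, and every function is a kernel sum of order `m`.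
Relabelling by a permutation preserves complete degeneracy. -/

section Combinatorics

variable {α R : Type*} [DecidableEq α]

theorem Finset.sum_powerset_sum_erase [AddCommMonoid R] (K : Finset α)
    (G : Finset α → Finset α → R) :
    ∑ i ∈ K.powerset, ∑ a ∈ i, G (i.erase a) i =
      ∑ s ∈ K.powerset, ∑ a ∈ K \ s, G s (insert a s) := by
  rw [sum_comm' (t' := K) (s' := fun a => K.powerset.filter (a ∈ ·)) (by grind),
    sum_comm' (t' := K) (s' := fun a => K.powerset.filter (a ∉ ·)) (by grind)]
  refine sum_congr rfl fun a ha => ?_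
  refine sum_nbij' (fun i => i.erase a) (insert a) ?_ ?_ ?_ ?_ ?_ <;>
    intro i hi <;> simp only [mem_filter, mem_powerset] at hi
  · simpa using (erase_subset a i).trans hi.1
  · simpa using insert_subset ha hi.1
  · exact insert_erase hi.2
  · exact erase_insert hi.2
  · rw [insert_erase hi.2]

variable [Fintype α]

theorem Finset.card_filter_subset_powersetCard (A : Finset α) (m : ℕ) :
    #{K ∈ univ.powersetCard m | A ⊆ K} =
      if #A ≤ m then (Fintype.card α - #A).choose (m - #A) else 0 := by
  split_ifs with h
  · rw [← card_compl, ← card_powersetCard]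
    refine card_nbij' (· \ A) (· ∪ A) ?_ ?_ ?_ ?_ <;> intro K hK <;>
      simp only [mem_coe, mem_filter, mem_powersetCard, subset_univ, true_and,
        subset_compl_iff_disjoint_right] at hK ⊢
    · exact ⟨disjoint_sdiff_self_left, by rw [card_sdiff_of_subset hK.2, hK.1]⟩
    · exact ⟨by rw [card_union_of_disjoint hK.1, hK.2]; omega, subset_union_right⟩
    · exact sdiff_union_of_subset hK.2
    · exact union_sdiff_cancel_right hK.1
  · rw [card_eq_zero, filter_eq_empty_iff]
    intro K hK hAK
    exact h ((card_le_card hAK).trans (mem_powersetCard_univ.1 hK).le)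

theorem Finset.sum_compl_sum_filter_insert_subset [AddCommMonoid R] (s : Finset α) (b : ℕ)
    (ψ : Finset α → R) :
    ∑ a ∈ sᶜ, ∑ j ∈ univ.powersetCard b with insert a s ⊆ j, ψ j =
      (b - #s) • ∑ j ∈ univ.powersetCard b with s ⊆ j, ψ j := by
  rw [sum_comm' (t' := {j ∈ univ.powersetCard b | s ⊆ j}) (s' := fun j => j \ s)
    (by grind [mem_compl]), smul_sum]
  refine sum_congr rfl fun j hj => ?_
  simp only [mem_filter, mem_powersetCard_univ] at hj
  rw [sum_const, card_sdiff_of_subset hj.2, hj.1]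

theorem Finset.sum_powersetCard_mul_sum_powersetCard [CommSemiring R] (m a b : ℕ)
    (φ ψ : Finset α → R) :
    ∑ K ∈ univ.powersetCard m, (∑ i ∈ K.powersetCard a, φ i) * ∑ j ∈ K.powersetCard b, ψ j =
      ∑ i ∈ univ.powersetCard a, ∑ j ∈ univ.powersetCard b,
        #{K ∈ univ.powersetCard m | i ∪ j ⊆ K} • (φ i * ψ j) := by
  simp_rw [sum_mul_sum]
  rw [sum_comm' (t' := univ.powersetCard a) (s' := fun i => {K ∈ univ.powersetCard m | i ⊆ K})
    (by intros; simp only [mem_powersetCard, subset_univ, true_and, mem_filter]; tauto)]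
  refine sum_congr rfl fun i _ => ?_
  rw [sum_comm' (t' := univ.powersetCard b) (s' := fun j => {K ∈ univ.powersetCard m | i ∪ j ⊆ K})
    (by intros; simp only [mem_filter, mem_powersetCard, subset_univ, true_and, union_subset_iff]
        tauto)]
  simp_rw [sum_const]

end Combinatorics

section UpDown

variable {α : Type*} [DecidableEq α]

def upOp : (Finset α → ℂ) →ₗ[ℂ] Finset α → ℂ where
  toFun χ i := ∑ a ∈ i, χ (i.erase a)
  map_add' _ _ := by ext; simp [sum_add_distrib]
  map_smul' _ _ := by ext; simp [mul_sum]

theorem upOp_apply (χ : Finset α → ℂ) (i : Finset α) : upOp χ i = ∑ a ∈ i, χ (i.erase a) := rfl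

theorem sum_powersetCard_upOp (K : Finset α) (l : ℕ) (χ : Finset α → ℂ) :
    ∑ i ∈ K.powersetCard (l + 1), upOp χ i = (#K - l) • ∑ s ∈ K.powersetCard l, χ s := by
  calc ∑ i ∈ K.powersetCard (l + 1), upOp χ i
      = ∑ i ∈ K.powerset, ∑ a ∈ i, if #i = l + 1 then χ (i.erase a) else 0 := by
        simp only [powersetCard_eq_filter, sum_filter, upOp_apply, sum_ite_irrel, sum_const_zero]
    _ = ∑ s ∈ K.powerset, ∑ a ∈ K \ s, if #(insert a s) = l + 1 then χ s else 0 :=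
        sum_powerset_sum_erase K fun s i => if #i = l + 1 then χ s else 0
    _ = ∑ s ∈ K.powerset, if #s = l then #(K \ s) • χ s else 0 := by
        refine sum_congr rfl fun s _ => ?_
        rw [sum_congr rfl fun a ha => by rw [card_insert_of_notMem (mem_sdiff.1 ha).2],
          sum_ite_irrel, sum_const, sum_const_zero]
        simp only [Nat.add_right_cancel_iff]
    _ = (#K - l) • ∑ s ∈ K.powersetCard l, χ s := by
        rw [powersetCard_eq_filter, sum_filter, smul_sum]
        refine sum_congr rfl fun s hs => ?_
        split_ifs with h
        · rw [card_sdiff_of_subset (mem_powerset.1 hs), h]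
        · exact (smul_zero _).symm

variable [Fintype α]

def downOp : (Finset α → ℂ) →ₗ[ℂ] Finset α → ℂ where
  toFun φ s := ∑ a ∈ sᶜ, φ (insert a s)
  map_add' _ _ := by ext; simp [sum_add_distrib]
  map_smul' _ _ := by ext; simp [mul_sum]

theorem downOp_apply (φ : Finset α → ℂ) (s : Finset α) :
    downOp φ s = ∑ a ∈ sᶜ, φ (insert a s) := rfl

theorem upOp_dotProduct_star (χ φ : Finset α → ℂ) :
    upOp χ ⬝ᵥ star φ = χ ⬝ᵥ star (downOp φ) := by
  simp only [dotProduct, upOp_apply, downOp_apply, Pi.star_apply, star_sum, sum_mul, mul_sum]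
  simpa [compl_eq_univ_sdiff] using sum_powerset_sum_erase univ fun s i => χ s * star (φ i)

theorem exists_eq_upOp_add_downOp_eq_zero (φ : Finset α → ℂ) :
    ∃ χ z, downOp z = 0 ∧ φ = upOp χ + z := by
  let e := (WithLp.linearEquiv 2 ℂ (Finset α → ℂ)).symm
  have hadj : e.conj downOp = (e.conj upOp).adjoint :=
    (LinearMap.eq_adjoint_iff _ _).2 fun x y => (upOp_dotProduct_star y.ofLp x.ofLp).symm
  have : e φ ∈ LinearMap.range (e.conj upOp) ⊔ LinearMap.ker (e.conj downOp) := by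
    rw [hadj, ← LinearMap.orthogonal_range, Submodule.sup_orthogonal_of_hasOrthogonalProjection]
    trivial
  obtain ⟨_, ⟨χ, rfl⟩, z, hz, h⟩ := Submodule.mem_sup.1 this
  refine ⟨e.symm χ, e.symm z, ?_, ?_⟩
  · simpa [e, LinearEquiv.conj_apply] using hz
  · simpa [e, LinearEquiv.conj_apply] using congrArg e.symm h.symm

end UpDown

namespace degenKer

variable {n b : ℕ} {ψ : Finset (Fin n) → ℂ}

theorem sum_filter_superset_eq_zero (hψ : degenKer n b ψ) {s : Finset (Fin n)} (hs : #s < b) :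
    ∑ j ∈ univ.powersetCard b with s ⊆ j, ψ j = 0 := by
  refine Finset.strongDownwardInductionOn (n := b - 1)
    (p := fun s => ∑ j ∈ univ.powersetCard b with s ⊆ j, ψ j = 0) s (fun s ih hs => ?_) (by omega)
  have hsum : ∑ a ∈ sᶜ, ∑ j ∈ univ.powersetCard b with insert a s ⊆ j, ψ j = 0 := by
    rcases (show #s + 1 = b ∨ #s + 1 < b by omega) with hsb | hsb
    · rw [← hψ s (by omega)]
      refine sum_congr rfl fun a ha => sum_eq_single_of_mem _ ?_ fun j hj hne => ?_
      · simp [card_insert_of_notMem (mem_compl.1 ha), hsb]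
      · rw [mem_filter, mem_powersetCard_univ] at hj
        refine absurd (eq_of_subset_of_card_le hj.2 ?_).symm hne
        rw [card_insert_of_notMem (mem_compl.1 ha)]
        omega
    · refine sum_eq_zero fun a ha => ih ?_ (ssubset_insert (mem_compl.1 ha))
      rw [card_insert_of_notMem (mem_compl.1 ha)]
      omega
  rw [sum_compl_sum_filter_insert_subset, smul_eq_zero] at hsum
  exact hsum.resolve_left (by omega)

theorem sum_filter_inter_eq_zero (hψ : degenKer n b ψ) {i s : Finset (Fin n)} (hi : #i < b)
    (hsi : s ⊆ i) : ∑ j ∈ univ.powersetCard b with j ∩ i = s, ψ j = 0 := by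
  refine Finset.strongDownwardInductionOn (n := #i)
    (p := fun s => s ⊆ i → ∑ j ∈ univ.powersetCard b with j ∩ i = s, ψ j = 0) s
    (fun s ih _ hsi => ?_) (card_le_card hsi) hsi
  have hfiber : ∀ t : Finset (Fin n), s ⊆ t →
      {j ∈ {j ∈ (univ : Finset (Fin n)).powersetCard b | s ⊆ j} | j ∩ i = t} =
        {j ∈ (univ : Finset (Fin n)).powersetCard b | j ∩ i = t} := by
    intro t hst
    rw [filter_filter]
    exact filter_congr fun j _ => ⟨And.right, fun (h : j ∩ i = t) =>
      ⟨hst.trans (h ▸ inter_subset_left), h⟩⟩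
  have h0 := hψ.sum_filter_superset_eq_zero ((card_le_card hsi).trans_lt hi)
  rw [← sum_fiberwise_of_maps_to (t := {t ∈ i.powerset | s ⊆ t}) (g := (· ∩ i)) (fun j hj =>
      mem_filter.2 ⟨mem_powerset.2 inter_subset_right, subset_inter (mem_filter.1 hj).2 hsi⟩),
    sum_eq_single_of_mem s (mem_filter.2 ⟨mem_powerset.2 hsi, subset_refl s⟩) fun t ht hts => ?_,
    hfiber s (subset_refl s)] at h0
  · exact h0
  · rw [mem_filter, mem_powerset] at ht
    rw [hfiber t ht.2]
    exact ih (card_le_card ht.1) (ssubset_of_subset_of_ne ht.2 hts.symm) ht.1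

theorem sum_mul_inter_eq_zero (hψ : degenKer n b ψ) {i : Finset (Fin n)} (hi : #i < b)
    (F : Finset (Fin n) → ℂ) : ∑ j ∈ univ.powersetCard b, F (j ∩ i) * ψ j = 0 := by
  rw [← sum_fiberwise_of_maps_to (t := i.powerset) (g := (· ∩ i))
    fun j _ => mem_powerset.2 inter_subset_right]
  refine sum_eq_zero fun s hs => ?_
  rw [sum_congr rfl fun j hj => by rw [(mem_filter.1 hj).2], ← mul_sum,
    hψ.sum_filter_inter_eq_zero hi (mem_powerset.1 hs), mul_zero]

theorem sum_powersetCard_mul_sum_powersetCard_eq_zero (hψ : degenKer n b ψ) {a : ℕ} (hab : a < b)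
    (m : ℕ) (φ : Finset (Fin n) → ℂ) :
    ∑ K ∈ univ.powersetCard m, (∑ i ∈ K.powersetCard a, φ i) * ∑ j ∈ K.powersetCard b, ψ j = 0 := by
  -- `N c` counts the `m`-subsets containing a given `c`-subset
  set N : ℕ → ℂ := fun c => ((if c ≤ m then (n - c).choose (m - c) else 0 : ℕ) : ℂ)
  calc _ = ∑ i ∈ univ.powersetCard a, ∑ j ∈ univ.powersetCard b,
        #{K ∈ univ.powersetCard m | i ∪ j ⊆ K} • (φ i * ψ j) :=
      sum_powersetCard_mul_sum_powersetCard m a b φ ψ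
    _ = ∑ i ∈ univ.powersetCard a, φ i * ∑ j ∈ univ.powersetCard b, N (a + b - #(j ∩ i)) * ψ j := by
      refine sum_congr rfl fun i hi => ?_
      rw [mul_sum]
      refine sum_congr rfl fun j hj => ?_
      have := card_union_add_card_inter i j
      rw [mem_powersetCard_univ] at hi hj
      rw [card_filter_subset_powersetCard, Fintype.card_fin, nsmul_eq_mul,
        show #(i ∪ j) = a + b - #(j ∩ i) by rw [inter_comm]; omega]
      ring
    _ = 0 := sum_eq_zero fun i hi => by
      rw [hψ.sum_mul_inter_eq_zero ((mem_powersetCard_univ.1 hi).trans_lt hab)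
        fun t => N (a + b - #t), mul_zero]

theorem comp_map (hψ : degenKer n b ψ) (σ : Equiv.Perm (Fin n)) :
    degenKer n b fun i => ψ (i.map σ.toEmbedding) := by
  intro j hj
  simp only [map_insert, Equiv.coe_toEmbedding]
  rw [← hψ (j.map σ.toEmbedding) (by rwa [card_map])]
  exact sum_equiv σ (fun a => by simp) fun _ _ => rfl

end degenKer

section Hoeffding

def kernelSum (n m l : ℕ) : (Finset (Fin n) → ℂ) →ₗ[ℂ] VSet n m → ℂ where
  toFun φ k := ∑ i ∈ k.1.powersetCard l, φ i
  map_add' _ _ := by ext; simp [sum_add_distrib]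
  map_smul' _ _ := by ext; simp [mul_sum]

variable {n m : ℕ}

theorem kernelSum_apply (l : ℕ) (φ : Finset (Fin n) → ℂ) (k : VSet n m) :
    kernelSum n m l φ k = ∑ i ∈ k.1.powersetCard l, φ i := rfl

theorem kernelSum_upOp (l : ℕ) (χ : Finset (Fin n) → ℂ) :
    kernelSum n m (l + 1) (upOp χ) = (m - l) • kernelSum n m l χ := by
  ext k
  rw [kernelSum_apply, sum_powersetCard_upOp, k.2]
  rfl

theorem kernelSum_permSub (l : ℕ) (ψ : Finset (Fin n) → ℂ) (σ : Equiv.Perm (Fin n))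
    (k : VSet n m) :
    kernelSum n m l ψ (permSub σ k) = kernelSum n m l (fun i => ψ (i.map σ.toEmbedding)) k := by
  show ∑ i ∈ (k.1.image σ).powersetCard l, ψ i = _
  rw [← Equiv.coe_toEmbedding, ← map_eq_image, powersetCard_map, sum_map]
  rfl

theorem star_kernelSum_dotProduct_kernelSum {a b : ℕ} (hab : a < b) (φ : Finset (Fin n) → ℂ)
    {ψ : Finset (Fin n) → ℂ} (hψ : degenKer n b ψ) :
    star (kernelSum n m a φ) ⬝ᵥ kernelSum n m b ψ = 0 := by
  simp only [dotProduct, Pi.star_apply, kernelSum_apply, star_sum]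
  rw [← hψ.sum_powersetCard_mul_sum_powersetCard_eq_zero hab m (star φ)]
  exact (sum_subtype (univ.powersetCard m) (fun _ => mem_powersetCard_univ)
    fun K => (∑ i ∈ K.powersetCard a, star φ i) * ∑ j ∈ K.powersetCard b, ψ j).symm

theorem kernelSum_mem_hoeffSpace {l : ℕ} (hl : l ≠ 0) {φ : Finset (Fin n) → ℂ}
    (hφ : degenKer n l φ) : kernelSum n m l φ ∈ HoeffSpace n m l := by
  rw [HoeffSpace, if_neg hl]
  exact Submodule.subset_span ⟨φ, hφ, fun _ => rfl⟩

theorem hoeffSpace_le_range_kernelSum (l : ℕ) :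
    HoeffSpace n m l ≤ LinearMap.range (kernelSum n m l) := by
  unfold HoeffSpace
  split_ifs with hl
  · subst hl
    refine Submodule.span_le.2 <| Set.singleton_subset_iff.2 ⟨fun _ => 1, ?_⟩
    ext k
    simp [kernelSum_apply]
  · refine Submodule.span_le.2 ?_
    rintro f ⟨φ, -, hf⟩
    exact ⟨φ, funext fun k => (hf k).symm⟩

theorem star_dotProduct_eq_zero_of_lt {a b : ℕ} (hab : a < b) {f h : VSet n m → ℂ}
    (hf : f ∈ HoeffSpace n m a) (hh : h ∈ HoeffSpace n m b) : star f ⬝ᵥ h = 0 := by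
  obtain ⟨φ, rfl⟩ := hoeffSpace_le_range_kernelSum a hf
  rw [HoeffSpace, if_neg (by omega)] at hh
  refine (Submodule.span_le (p := LinearMap.ker (dotProductBilin ℂ ℂ (star (kernelSum n m a φ))))).2
    ?_ hh
  rintro _ ⟨ψ, hψ, hh⟩
  rw [SetLike.mem_coe, LinearMap.mem_ker, funext hh]
  exact star_kernelSum_dotProduct_kernelSum (m := m) hab φ hψ

theorem dotProduct_star_eq_zero_of_ne {a b : ℕ} (hab : a ≠ b) {f h : VSet n m → ℂ}
    (hf : f ∈ HoeffSpace n m a) (hh : h ∈ HoeffSpace n m b) : f ⬝ᵥ star h = 0 := by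
  rcases hab.lt_or_gt with hab | hab
  · rw [Matrix.dotProduct_star, dotProduct_comm, star_dotProduct_eq_zero_of_lt hab hf hh, star_zero]
  · rw [dotProduct_comm, star_dotProduct_eq_zero_of_lt hab hh hf]

open scoped ComplexOrder in
theorem iSupIndep_hoeffSpace : iSupIndep fun l : ℕ => HoeffSpace n m l := by
  refine iSupIndep_def.2 fun i => Submodule.disjoint_def.2 fun f hfi hf => ?_
  have : (⨆ (j) (_ : j ≠ i), HoeffSpace n m j) ≤ LinearMap.ker (dotProductBilin ℂ ℂ (star f)) :=
    iSup₂_le fun j hji h hh => by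
      simpa [dotProduct_comm] using dotProduct_star_eq_zero_of_ne hji hh hfi
  exact dotProduct_star_self_eq_zero.1 (this hf)

theorem kernelSum_mem_iSup_hoeffSpace {l : ℕ} (hl : l ≤ m) (φ : Finset (Fin n) → ℂ) :
    kernelSum n m l φ ∈ ⨆ l' : Fin (m + 1), HoeffSpace n m l' := by
  induction l generalizing φ with
  | zero =>
    refine Submodule.mem_iSup_of_mem (0 : Fin (m + 1)) ?_
    rw [Fin.val_zero, HoeffSpace, if_pos rfl]
    exact Submodule.mem_span_singleton.2 ⟨φ ∅, by ext; simp [kernelSum_apply]⟩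
  | succ l ih =>
    obtain ⟨χ, z, hz, rfl⟩ := exists_eq_upOp_add_downOp_eq_zero φ
    rw [map_add, kernelSum_upOp]
    refine add_mem (nsmul_mem (ih (by omega) χ) _) ?_
    refine Submodule.mem_iSup_of_mem (⟨l + 1, by omega⟩ : Fin (m + 1)) ?_
    exact kernelSum_mem_hoeffSpace l.succ_ne_zero fun j _ => congrFun hz j

theorem iSup_hoeffSpace_eq_top : ⨆ l : Fin (m + 1), HoeffSpace n m l = ⊤ := by
  refine eq_top_iff.2 fun f _ => ?_
  convert kernelSum_mem_iSup_hoeffSpace le_rfl fun i => if h : #i = m then f ⟨i, h⟩ else 0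
  ext ⟨k, rfl⟩
  simp [kernelSum_apply]

theorem permAct_mem_hoeffSpace {l : ℕ} (σ : Equiv.Perm (Fin n)) {f : VSet n m → ℂ}
    (hf : f ∈ HoeffSpace n m l) : permAct σ f ∈ HoeffSpace n m l := by
  suffices HoeffSpace n m l ≤ (HoeffSpace n m l).comap (LinearMap.funLeft ℂ ℂ (permSub σ⁻¹)) from
    this hf
  unfold HoeffSpace
  split_ifs with hl
  · exact Submodule.span_le.2 <| Set.singleton_subset_iff.2 <| Submodule.subset_span rfl
  · refine Submodule.span_le.2 ?_
    rintro _ ⟨ψ, hψ, hf⟩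
    refine Submodule.subset_span ⟨_, hψ.comp_map σ⁻¹, fun k => ?_⟩
    rw [LinearMap.funLeft_apply, hf, ← kernelSum_apply, kernelSum_permSub, kernelSum_apply]

end Hoeffding

theorem hoeffding_decomposition_general (n m : ℕ) :
    DirectSum.IsInternal (fun l : Fin (m + 1) => HoeffSpace n m l) ∧
    (∀ i j : Fin (m + 1), i ≠ j →
      ∀ f ∈ HoeffSpace n m i, ∀ h ∈ HoeffSpace n m j,
        (Nat.choose n m : ℂ)⁻¹ *
          ∑ k : VSet n m, f k * (starRingEnd ℂ) (h k) = 0) ∧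
    (∀ (l : Fin (m + 1)) (x : Equiv.Perm (Fin n)) (f : VSet n m → ℂ),
      f ∈ HoeffSpace n m l → permAct x f ∈ HoeffSpace n m l) := by
  refine ⟨?_, fun i j hij f hf h hh => ?_, fun l x f hf => permAct_mem_hoeffSpace x hf⟩
  · rw [DirectSum.isInternal_submodule_iff_iSupIndep_and_iSup_eq_top]
    exact ⟨iSupIndep_hoeffSpace.comp Fin.val_injective, iSup_hoeffSpace_eq_top⟩
  · rw [show ∑ k, f k * (starRingEnd ℂ) (h k) = f ⬝ᵥ star h from rfl,
      dotProduct_star_eq_zero_of_ne (Fin.val_injective.ne hij) hf hh, mul_zero]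

/-- Hoeffding decomposition: `L(V^{(n-m,m)}) = W₀ ⊕ W₁ ⊕ ⋯ ⊕ W_m`, an orthogonal
direct sum for the inner product `⟨f,h⟩ = C(n,m)⁻¹ ∑_k f(k) conj(h(k))`, with each
`W_l` invariant under the `S_n`-action `(x·f)(k) = f(x⁻¹·k)`. -/
theorem hoeffding_decomposition (n m : ℕ) (hn : 2 ≤ n) (hm1 : 1 ≤ m)
    (hm : 2 * m ≤ n) :
    DirectSum.IsInternal (fun l : Fin (m + 1) => HoeffSpace n m l) ∧
    (∀ i j : Fin (m + 1), i ≠ j →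
      ∀ f ∈ HoeffSpace n m i, ∀ h ∈ HoeffSpace n m j,
        (Nat.choose n m : ℂ)⁻¹ *
          ∑ k : VSet n m, f k * (starRingEnd ℂ) (h k) = 0) ∧
    (∀ (l : Fin (m + 1)) (x : Equiv.Perm (Fin n)) (f : VSet n m → ℂ),
      f ∈ HoeffSpace n m l → permAct x f ∈ HoeffSpace n m l) :=
  hoeffding_decomposition_general n m
end

section
/- Let n ≥ 2 and 1 ≤ m ≤ n/2, and let X be a uniform random permutation of {1,...,n}. Suppose f and h are functions on m-subsets of {1,...,n} lying in distinct symmetric Hoeffding spaces W_j and W_l (1 ≤ j ≠ l ≤ m, as defined via completely degenerate kernels). Then for every injection κ: {1,...,m} → {1,...,n}, writing X'_{(m)} = {X(κ(1)),...,X(κ(m))}, one has E[f(X_{(m)}) · conj(h(X'_{(m)}))] = 0. -/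
/-!
Expanding both sums, `∑ₓ f(x A) conj h(x B) = ∑_{i,i'} φ(i) conj ψ(i') N(i,i')`, where `N(i,i')` counts
the permutations `x` with `i ⊆ x A` and `i' ⊆ x B`. `N` is invariant under the diagonal action of
`S_n`, whose orbits on pairs of sets of sizes `j, l` are classified by `|i ∩ i'|`; by binomial
inversion, `N(i,i') = ∑_{s ⊆ i ∩ i'} μ(|s|)` for some `μ`. Exchanging the sums leaves
`∑ₛ μ(|s|) Φ(s) conj Ψ(s)` with `Φ(s) = ∑_{s ⊆ i, |i| = j} φ(i)`. Complete degeneracy forces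
`Φ(s) = 0` unless `|s| = j`, and `Ψ(s) = 0` unless `|s| = l`, so every term vanishes when `j ≠ l`.
-/

open Finset

section BinomialInverse

variable {M : Type*} [AddCommGroup M]

def binomialInverse (ν : ℕ → M) : ℕ → M
  | r => ν r - ∑ k ∈ (range r).attach, r.choose k • binomialInverse ν k
decreasing_by exact mem_range.1 k.2

theorem sum_powerset_binomialInverse (ν : ℕ → M) {β : Type*} (S : Finset β) :
    ∑ s ∈ S.powerset, binomialInverse ν #s = ν #S := by
  rw [sum_powerset_apply_card, sum_range_succ, Nat.choose_self, one_smul, binomialInverse,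
    sum_attach (range #S) fun k => (#S).choose k • binomialInverse ν k]
  abel

end BinomialInverse

section PermutationCounting

variable {α : Type*} [DecidableEq α]

theorem injective_sumElim_val_inter_sdiff (s t : Finset α) :
    Function.Injective (Sum.elim (Subtype.val : ↥(s ∩ t) → α)
      (Sum.elim (Subtype.val : ↥(s \ t) → α) (Subtype.val : ↥(t \ s) → α))) := by
  refine Subtype.val_injective.sumElim
    (Subtype.val_injective.sumElim Subtype.val_injective ?_) ?_
  · rintro ⟨x, hx⟩ ⟨y, hy⟩ rfl
    exact (mem_sdiff.1 hy).2 (mem_sdiff.1 hx).1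
  · rintro ⟨x, hx⟩ (⟨y, hy⟩ | ⟨y, hy⟩) rfl
    · exact (mem_sdiff.1 hy).2 (mem_inter.1 hx).2
    · exact (mem_sdiff.1 hy).2 (mem_inter.1 hx).1

theorem exists_perm_image_eq_of_card_inter_eq {s t s' t' : Finset α} (hs : #s = #s')
    (ht : #t = #t') (hst : #(s ∩ t) = #(s' ∩ t')) :
    ∃ σ : Equiv.Perm α, s.image σ = s' ∧ t.image σ = t' := by
  have hst' : #(s \ t) = #(s' \ t') := by
    rw [card_sdiff, card_sdiff, inter_comm t, inter_comm t', hs, hst]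
  have hts' : #(t \ s) = #(t' \ s') := by rw [card_sdiff, card_sdiff, ht, hst]
  obtain ⟨σ, hσ⟩ := Equiv.Perm.exists_extending_pair _ _ (injective_sumElim_val_inter_sdiff s t)
    ((injective_sumElim_val_inter_sdiff s' t').comp ((equivOfCardEq hst).sumCongr
      ((equivOfCardEq hst').sumCongr (equivOfCardEq hts'))).injective)
  have h_inter {x} (hx : x ∈ s ∩ t) : σ x ∈ s' ∩ t' := by
    rw [show σ x = equivOfCardEq hst ⟨x, hx⟩ from hσ (.inl ⟨x, hx⟩)]
    exact coe_mem _
  have h_sdiff {x} (hx : x ∈ s \ t) : σ x ∈ s' \ t' := by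
    rw [show σ x = equivOfCardEq hst' ⟨x, hx⟩ from hσ (.inr (.inl ⟨x, hx⟩))]
    exact coe_mem _
  have h_sdiff' {x} (hx : x ∈ t \ s) : σ x ∈ t' \ s' := by
    rw [show σ x = equivOfCardEq hts' ⟨x, hx⟩ from hσ (.inr (.inr ⟨x, hx⟩))]
    exact coe_mem _
  refine ⟨σ, eq_of_subset_of_card_le ?_ ?_, eq_of_subset_of_card_le ?_ ?_⟩
  · refine image_subset_iff.2 fun x hx => ?_
    by_cases hxt : x ∈ t
    · exact (mem_inter.1 (h_inter (mem_inter.2 ⟨hx, hxt⟩))).1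
    · exact (mem_sdiff.1 (h_sdiff (mem_sdiff.2 ⟨hx, hxt⟩))).1
  · rw [card_image_of_injective _ σ.injective, hs]
  · refine image_subset_iff.2 fun x hx => ?_
    by_cases hxs : x ∈ s
    · exact (mem_inter.1 (h_inter (mem_inter.2 ⟨hxs, hx⟩))).2
    · exact (mem_sdiff.1 (h_sdiff' (mem_sdiff.2 ⟨hx, hxs⟩))).1
  · rw [card_image_of_injective _ σ.injective, ht]

theorem image_subset_image_perm_iff (i A : Finset α) (π x : Equiv.Perm α) :
    i.image π ⊆ A.image x ↔ i ⊆ A.image (π⁻¹ * x) := by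
  rw [← image_subset_image_iff π.injective (s := i), image_image]
  simp [Function.comp_def]

variable [Fintype α]

def pairCount (A B i i' : Finset α) : ℕ :=
  #{x : Equiv.Perm α | i ⊆ A.image x ∧ i' ⊆ B.image x}

theorem pairCount_image_perm (A B i i' : Finset α) (π : Equiv.Perm α) :
    pairCount A B (i.image π) (i'.image π) = pairCount A B i i' :=
  card_equiv (Equiv.mulLeft π⁻¹) fun x => by
    simp [image_subset_image_perm_iff]

theorem pairCount_eq_of_card_inter_eq (A B : Finset α) {i i' k k' : Finset α}
    (hi : #i = #k) (hi' : #i' = #k') (hii' : #(i ∩ i') = #(k ∩ k')) :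
    pairCount A B i i' = pairCount A B k k' := by
  obtain ⟨π, rfl, rfl⟩ := exists_perm_image_eq_of_card_inter_eq hi hi' hii'
  exact (pairCount_image_perm A B i i' π).symm

theorem exists_pairCount_eq_sum_powerset (A B : Finset α) (j l : ℕ) :
    ∃ μ : ℕ → ℂ, ∀ i i' : Finset α, #i = j → #i' = l →
      (pairCount A B i i' : ℂ) = ∑ s ∈ (i ∩ i').powerset, μ #s := by
  let profile : Finset α × Finset α → ℕ × ℕ × ℕ := fun p => (#p.1, #p.2, #(p.1 ∩ p.2))
  let count : Finset α × Finset α → ℂ := fun p => pairCount A B p.1 p.2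
  have hcount : count.FactorsThrough profile := fun p q hpq => by
    simp only [profile, Prod.mk.injEq] at hpq
    simp only [count, pairCount_eq_of_card_inter_eq A B hpq.1 hpq.2.1 hpq.2.2]
  refine ⟨binomialInverse fun r => Function.extend profile count 0 (j, l, r), ?_⟩
  rintro i i' rfl rfl
  rw [sum_powerset_binomialInverse]
  exact (hcount.extend_apply 0 (i, i')).symm

variable {R : Type*} [CommSemiring R]

def supsetSum (φ : Finset α → R) (j : ℕ) (s : Finset α) : R :=
  ∑ i ∈ univ.powersetCard j with s ⊆ i, φ i

theorem supsetSum_eq_zero_of_lt_card (φ : Finset α → R) {j : ℕ} {s : Finset α}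
    (h : j < #s) : supsetSum φ j s = 0 :=
  sum_eq_zero fun i hi => by
    obtain ⟨hi, hsi⟩ := mem_filter.1 hi
    have := card_le_card hsi
    rw [(mem_powersetCard.1 hi).2] at this
    omega

theorem supsetSum_of_card_eq (φ : Finset α → R) {j : ℕ} {s : Finset α} (h : #s = j) :
    supsetSum φ j s = φ s := by
  rw [supsetSum, sum_eq_single_of_mem s (by simp [h])]
  intro i hi his
  obtain ⟨hi, hsi⟩ := mem_filter.1 hi
  exact absurd (eq_of_subset_of_card_le hsi (by rw [h, (mem_powersetCard.1 hi).2])).symm his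

theorem sum_compl_supsetSum_insert (φ : Finset α → R) (j : ℕ) (s : Finset α) :
    ∑ a ∈ sᶜ, supsetSum φ j (insert a s) = (j - #s) • supsetSum φ j s := by
  simp only [supsetSum, sum_filter]
  rw [sum_comm, smul_sum]
  refine sum_congr rfl fun i hi => ?_
  by_cases hsi : s ⊆ i
  · have : {a ∈ sᶜ | insert a s ⊆ i} = i \ s := by
      ext a
      simp only [mem_filter, mem_compl, mem_sdiff, insert_subset_iff, hsi, and_true]
      tauto
    rw [if_pos hsi, ← sum_filter, this, sum_const, card_sdiff_of_subset hsi,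
      (mem_powersetCard.1 hi).2]
  · rw [if_neg hsi, smul_zero]
    exact sum_eq_zero fun a _ => if_neg fun h => hsi ((subset_insert a s).trans h)

theorem powersetCard_eq_filter_subset (k : ℕ) (S : Finset α) :
    S.powersetCard k = {i ∈ (univ : Finset α).powersetCard k | i ⊆ S} := by
  ext i
  simp only [mem_powersetCard, mem_filter, subset_univ, true_and]
  tauto

theorem sum_perm_sum_powersetCard_mul_eq_sum_pairCount (A B : Finset α) (j l : ℕ)
    (φ ψ : Finset α → R) :
    ∑ x : Equiv.Perm α,
        (∑ i ∈ (A.image x).powersetCard j, φ i) * ∑ i' ∈ (B.image x).powersetCard l, ψ i' =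
      ∑ i ∈ univ.powersetCard j, ∑ i' ∈ univ.powersetCard l,
        pairCount A B i i' • (φ i * ψ i') := by
  calc _ = ∑ x : Equiv.Perm α, ∑ i ∈ univ.powersetCard j, ∑ i' ∈ univ.powersetCard l,
        if i ⊆ A.image x ∧ i' ⊆ B.image x then φ i * ψ i' else 0 := by
        simp only [powersetCard_eq_filter_subset _ (image _ _), sum_filter, sum_mul_sum,
          ite_zero_mul_ite_zero]
    _ = _ := by
        rw [sum_comm]
        refine sum_congr rfl fun i _ => ?_
        rw [sum_comm]
        refine sum_congr rfl fun i' _ => ?_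
        rw [← sum_filter, sum_const, pairCount]

theorem sum_mul_sum_powerset_inter_eq_sum_supsetSum (j l : ℕ) (w φ ψ : Finset α → R) :
    ∑ i ∈ univ.powersetCard j, ∑ i' ∈ univ.powersetCard l,
        (∑ s ∈ (i ∩ i').powerset, w s) * (φ i * ψ i') =
      ∑ s, w s * (supsetSum φ j s * supsetSum ψ l s) := by
  have h_powerset (i i' : Finset α) :
      ∑ s ∈ (i ∩ i').powerset, w s = ∑ s, if s ⊆ i ∧ s ⊆ i' then w s else 0 := by
    rw [← sum_filter]
    congr 1
    ext s
    simp only [mem_powerset, subset_inter_iff, mem_filter, mem_univ, true_and]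
  simp only [h_powerset, sum_mul, ite_mul, zero_mul]
  rw [sum_comm_cycle]
  refine sum_congr rfl fun s _ => ?_
  rw [supsetSum, supsetSum, sum_filter, sum_filter, sum_mul_sum]
  simp only [ite_zero_mul_ite_zero]
  simp only [mul_sum, mul_ite, mul_zero]

end PermutationCounting

theorem degenKer.supsetSum_eq_zero_of_card_lt {n j : ℕ} {φ : Finset (Fin n) → ℂ}
    (hφ : degenKer n j φ) {s : Finset (Fin n)} (hs : #s < j) : supsetSum φ j s = 0 := by
  -- Descend from `#s = j - 1`, where `sum_compl_supsetSum_insert` is the degeneracy condition.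
  have of_sum_insert {s : Finset (Fin n)} (hs : #s < j)
      (h : ∑ a ∈ sᶜ, supsetSum φ j (insert a s) = 0) : supsetSum φ j s = 0 := by
    rw [sum_compl_supsetSum_insert] at h
    exact (smul_eq_zero.1 h).resolve_left (by omega)
  obtain ⟨d, hd⟩ : ∃ d, j = #s + d + 1 := ⟨j - #s - 1, by omega⟩
  induction d generalizing s with
  | zero =>
    refine of_sum_insert hs ((sum_congr rfl fun a ha => ?_).trans (hφ s (by omega)))
    exact supsetSum_of_card_eq φ (by rw [card_insert_of_notMem (mem_compl.1 ha)]; omega)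
  | succ d ih =>
    refine of_sum_insert hs (sum_eq_zero fun a ha => ?_)
    have := card_insert_of_notMem (mem_compl.1 ha)
    exact ih (by omega) (by omega)

theorem degenKer.supsetSum_eq_zero {n j : ℕ} {φ : Finset (Fin n) → ℂ} (hφ : degenKer n j φ)
    {s : Finset (Fin n)} (hs : #s ≠ j) : supsetSum φ j s = 0 :=
  (lt_or_gt_of_ne hs).elim hφ.supsetSum_eq_zero_of_card_lt (supsetSum_eq_zero_of_lt_card φ)

theorem degenKer.star {n j : ℕ} {φ : Finset (Fin n) → ℂ} (hφ : degenKer n j φ) :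
    degenKer n j fun i => starRingEnd ℂ (φ i) := fun s hs => by
  rw [← map_sum, hφ s hs, map_zero]

theorem degenKer.sum_perm_sum_powersetCard_mul_eq_zero {n j l : ℕ} {φ ψ : Finset (Fin n) → ℂ}
    (hφ : degenKer n j φ) (hψ : degenKer n l ψ) (hjl : j ≠ l) (A B : Finset (Fin n)) :
    ∑ x : Equiv.Perm (Fin n),
        (∑ i ∈ (A.image x).powersetCard j, φ i) * ∑ i' ∈ (B.image x).powersetCard l, ψ i' =
      0 := by
  obtain ⟨μ, hμ⟩ := exists_pairCount_eq_sum_powerset A B j l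
  have h_vanish (s : Finset (Fin n)) : supsetSum φ j s * supsetSum ψ l s = 0 := by
    by_cases hs : #s = j
    · rw [hψ.supsetSum_eq_zero (hs ▸ hjl), mul_zero]
    · rw [hφ.supsetSum_eq_zero hs, zero_mul]
  calc _ = ∑ i ∈ univ.powersetCard j, ∑ i' ∈ univ.powersetCard l,
        (∑ s ∈ (i ∩ i').powerset, μ #s) * (φ i * ψ i') := by
        rw [sum_perm_sum_powersetCard_mul_eq_sum_pairCount]
        refine sum_congr rfl fun i hi => sum_congr rfl fun i' hi' => ?_
        rw [nsmul_eq_mul, hμ i i' (mem_powersetCard.1 hi).2 (mem_powersetCard.1 hi').2]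
    _ = ∑ s, μ #s * (supsetSum φ j s * supsetSum ψ l s) := sum_mul_sum_powerset_inter_eq_sum_supsetSum ..
    _ = 0 := sum_eq_zero fun s _ => by rw [h_vanish, mul_zero]

/-- Symmetric `U`-statistics `f(X_{(m)})`, `h(X'_{(m)})` with completely degenerate
kernels of distinct orders `j ≠ l` stay orthogonal after shifting the argument of
the second one to an arbitrary `m`-subset of indices: with `κ : {1,...,m} → {1,...,n}`
injective and `X'_{(m)} = {X(κ(1)),...,X(κ(m))}`, one has
`E[f(X_{(m)}) conj(h(X'_{(m)}))] = 0`. -/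
theorem shifted_orthogonality_of_hoeffding_spaces (n m j l : ℕ) (hm : 2 * m ≤ n) (hjl : j ≠ l)
    (φ ψ : Finset (Fin n) → ℂ) (hφ : degenKer n j φ) (hψ : degenKer n l ψ)
    (κ : Fin m → Fin n) :
    Eperm n (fun x =>
        (∑ i ∈ ((firstSet n m (by omega)).1.image x).powersetCard j, φ i) *
          (starRingEnd ℂ)
            (∑ i ∈ (((Finset.univ : Finset (Fin m)).image κ).image x).powersetCard l,
              ψ i)) = 0 := by
  simp only [Eperm, map_sum]
  rw [hφ.sum_perm_sum_powersetCard_mul_eq_zero hψ.star hjl, zero_div]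
end
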